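/- Let α : ℝ → (0,1] with ∫₀^∞ ds/α(s) = ∞, and let c : [a,Ω) → M define a finite Busemann function b_{c,α}(x) = lim_{t→Ω} (∫₀^t ds/α(s) − d(x,c(t))) with respect to a generalized distance d on M. Then for every K ∈ ℝ there exists a reparametrized curve c̄ defined on [s_K(a), ∞) or [s_K(a), s_K(Ω)) such that b_{c̄,α} = b_{c,α} + K, where s_K is determined by ∫_t^{s_K(t)} dr/α(r) = K. In particular, the set of finite Busemann functions is invariant under addition of real constants. -/
import Mathlib


open Filter Set MeasureTheory

/-- The filter on ℝ of "t → Ω from the left", Ω ∈ (−∞,+∞] an extended real. -/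
noncomputable def lFil (Ω : EReal) : Filter ℝ :=
  Filter.comap (fun t : ℝ => (t : EReal)) (nhdsWithin Ω (Iio Ω))

lemma lFil_top : lFil ⊤ = atTop := by
  have h1 : (Iio (⊤ : EReal)) = {(⊤ : EReal)}ᶜ := by
    ext x; simp [lt_top_iff_ne_top]
  rw [lFil, h1, EReal.nhdsWithin_top]
  exact Filter.comap_map EReal.coe_injective

lemma lFil_coe (ω : ℝ) : lFil (ω : EReal) = nhdsWithin ω (Iio ω) := by
  rw [lFil, nhdsWithin, Filter.comap_inf, Filter.comap_principal, EReal.nhds_coe,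
    Filter.comap_map EReal.coe_injective, nhdsWithin]
  congr 1
  congr 1
  ext x; simp [EReal.coe_lt_coe_iff]

/-- Invariance of finite Busemann functions under addition of constants.
Let d be a quasi-distance on M, α : ℝ → (0,1] smooth with ∫₀^{±∞} ds/α(s) = ±∞,
and τ(t) = ∫₀^t ds/α(s).  Let c : [a,Ω) → M satisfy the speed bound
d(c(s),c(t)) < τ(t) − τ(s) (the integrated form of F(ċ(t)) < 1/α(t)) and have
finite Busemann function b(x) = lim_{t→Ω}(τ(t) − d(x,c(t))).  Then for every
K ∈ ℝ there are a reparametrizing function s_K with τ(s_K(t)) = τ(t) + K and a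
curve c' on [s_K(a), Ω') with c'(s_K(t)) = c(t), satisfying the same speed bound,
whose Busemann function is b + K. -/
theorem stmt11 {M : Type*} (d : M → M → ℝ)
    (hnonneg : ∀ x y, 0 ≤ d x y)
    (heq : ∀ x y, d x y = 0 ↔ x = y)
    (htri : ∀ x y z, d x z ≤ d x y + d y z)
    (hgen : ∀ (x : M) (u : ℕ → M),
      Tendsto (fun n => d x (u n)) atTop (nhds 0) ↔
      Tendsto (fun n => d (u n) x) atTop (nhds 0))
    (α : ℝ → ℝ) (hαsmooth : ContDiff ℝ (⊤ : ℕ∞) α)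
    (hα : ∀ t, 0 < α t ∧ α t ≤ 1)
    (hdivp : ∫⁻ s in Ici (0 : ℝ), ENNReal.ofReal (1 / α s) = ⊤)
    (hdivm : ∫⁻ s in Iic (0 : ℝ), ENNReal.ofReal (1 / α s) = ⊤)
    (τ : ℝ → ℝ) (hτ : ∀ t, τ t = ∫ r in (0 : ℝ)..t, 1 / α r)
    (a : ℝ) (Ω : EReal) (haΩ : (a : EReal) < Ω) (c : ℝ → M)
    (hc : ∀ s t : ℝ, a ≤ s → s < t → (t : EReal) < Ω →
      d (c s) (c t) < τ t - τ s)
    (b : M → ℝ)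
    (hb : ∀ x, Tendsto (fun t => τ t - d x (c t)) (lFil Ω) (nhds (b x))) :
    ∀ K : ℝ, ∃ (Ω' : EReal) (c' : ℝ → M) (sK : ℝ → ℝ),
      ((sK a : ℝ) : EReal) < Ω' ∧ StrictMono sK ∧
      (∀ t : ℝ, (∫ r in t..(sK t), 1 / α r) = K) ∧
      (∀ t : ℝ, a ≤ t → (t : EReal) < Ω → c' (sK t) = c t) ∧
      (∀ s t : ℝ, sK a ≤ s → s < t → (t : EReal) < Ω' →
        d (c' s) (c' t) < τ t - τ s) ∧
      (∀ x, Tendsto (fun t => τ t - d x (c' t)) (lFil Ω') (nhds (b x + K))) := by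

  intro K
  -- basic facts about τ
  have hαc : Continuous fun r => 1 / α r :=
    continuous_const.div hαsmooth.continuous fun r => (hα r).1.ne'
  have hint : ∀ s t : ℝ, IntervalIntegrable (fun r => 1 / α r) volume s t :=
    fun s t => hαc.intervalIntegrable s t
  have hsub : ∀ s t : ℝ, τ t - τ s = ∫ r in s..t, 1 / α r := by
    intro s t
    rw [hτ, hτ]
    exact intervalIntegral.integral_interval_sub_left (hint 0 t) (hint 0 s)
  have hge : ∀ s t : ℝ, s ≤ t → t - s ≤ τ t - τ s := by
    intro s t hst
    rw [hsub]
    calc t - s = ∫ _ in s..t, (1 : ℝ) := by simp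
    _ ≤ ∫ r in s..t, 1 / α r := by
        refine intervalIntegral.integral_mono_on hst (intervalIntegrable_const) (hint s t) ?_
        intro r _
        exact one_le_one_div (hα r).1 (hα r).2
  have hmono : StrictMono τ := fun s t h => by linarith [hge s t h.le]
  have hcont : Continuous τ := by
    have := intervalIntegral.continuous_primitive hint 0
    have h2 : τ = fun t => ∫ r in (0:ℝ)..t, 1 / α r := funext hτ
    rw [h2]; exact this
  have htop : Tendsto τ atTop atTop := by
    refine tendsto_atTop_mono' atTop ?_ tendsto_id
    filter_upwards [eventually_ge_atTop (0:ℝ)] with t ht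
    have := hge 0 t ht
    have h0 : τ 0 = 0 := by rw [hτ]; simp
    simp only [id]; linarith
  have hbot : Tendsto τ atBot atBot := by
    refine tendsto_atBot_mono' atBot ?_ tendsto_id
    filter_upwards [eventually_le_atBot (0:ℝ)] with t ht
    have := hge t 0 ht
    have h0 : τ 0 = 0 := by rw [hτ]; simp
    simp only [id]; linarith
  have hsurj : Function.Surjective τ := hcont.surjective htop hbot
  set e : ℝ ≃o ℝ := StrictMono.orderIsoOfSurjective τ hmono hsurj with he_def
  have he : ∀ y : ℝ, τ (e.symm y) = y := fun y =>
    StrictMono.orderIsoOfSurjective_self_symm_apply τ hmono hsurj y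
  have hsymm : ∀ t : ℝ, e.symm (τ t) = t := fun t =>
    StrictMono.orderIsoOfSurjective_symm_apply_self τ hmono hsurj t
  set sK : ℝ → ℝ := fun t => e.symm (τ t + K) with hsK_def
  set g : ℝ → ℝ := fun t => e.symm (τ t - K) with hg_def
  have hτsK : ∀ t, τ (sK t) = τ t + K := fun t => he _
  have hτg : ∀ t, τ (g t) = τ t - K := fun t => he _
  have hgsK : ∀ t, g (sK t) = t := by
    intro t
    show e.symm (τ (sK t) - K) = t
    rw [hτsK, add_sub_cancel_right, hsymm]
  have hsKmono : StrictMono sK := fun s t h =>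
    e.symm.strictMono (by linarith [hmono h])
  have hgmono : StrictMono g := fun s t h =>
    e.symm.strictMono (by linarith [hmono h])
  have hgcont : Continuous g := e.symm.continuous.comp (hcont.sub continuous_const)
  -- common part
  have main : ∀ Ω' : EReal, ((sK a : ℝ) : EReal) < Ω' →
      (∀ t : ℝ, (t : EReal) < Ω' → ((g t : ℝ) : EReal) < Ω) →
      Tendsto g (lFil Ω') (lFil Ω) →
      ∃ (Ω'' : EReal) (c' : ℝ → M) (sK' : ℝ → ℝ),
      ((sK' a : ℝ) : EReal) < Ω'' ∧ StrictMono sK' ∧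
      (∀ t : ℝ, (∫ r in t..(sK' t), 1 / α r) = K) ∧
      (∀ t : ℝ, a ≤ t → (t : EReal) < Ω → c' (sK' t) = c t) ∧
      (∀ s t : ℝ, sK' a ≤ s → s < t → (t : EReal) < Ω'' →
        d (c' s) (c' t) < τ t - τ s) ∧
      (∀ x, Tendsto (fun t => τ t - d x (c' t)) (lFil Ω'') (nhds (b x + K))) := by
    intro Ω' h1 h2 h3
    refine ⟨Ω', c ∘ g, sK, h1, hsKmono, ?_, ?_, ?_, ?_⟩
    · intro t
      rw [← hsub t (sK t), hτsK]; ring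
    · intro t _ _
      show c (g (sK t)) = c t
      rw [hgsK]
    · intro s t hs hst ht
      have hau : a ≤ g s := by
        have h4 : τ (sK a) ≤ τ s := hmono.monotone hs
        rw [hτsK] at h4
        have : τ a ≤ τ (g s) := by rw [hτg]; linarith
        exact (hmono.le_iff_le).mp this
      have huv : g s < g t := hgmono hst
      have hvΩ : ((g t : ℝ) : EReal) < Ω := h2 t ht
      have := hc (g s) (g t) hau huv hvΩ
      show d (c (g s)) (c (g t)) < τ t - τ s
      rw [hτg, hτg] at this
      linarith
    · intro x
      have h4 : Tendsto (fun t => τ (g t) - d x (c (g t))) (lFil Ω') (nhds (b x)) :=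
        (hb x).comp h3
      have h5 : (fun t => τ t - d x ((c ∘ g) t)) =
          fun t => (τ (g t) - d x (c (g t))) + K := by
        funext t
        simp only [Function.comp_apply, hτg]
        ring
      rw [h5]
      exact h4.add_const K
  -- case split on Ω
  induction Ω using EReal.rec with
  | bot => exact absurd haΩ (by simp)
  | top =>
    refine main ⊤ (EReal.coe_lt_top _) (fun t _ => EReal.coe_lt_top _) ?_
    rw [lFil_top]
    refine tendsto_atTop_atTop_of_monotone hgmono.monotone ?_
    intro y
    exact ⟨sK y, (hgsK y).ge⟩
  | coe ω =>
    have haω : a < ω := EReal.coe_lt_coe_iff.mp haΩ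
    have hgω : g (sK ω) = ω := hgsK ω
    refine main ((sK ω : ℝ) : EReal) (EReal.coe_lt_coe_iff.mpr (hsKmono haω)) ?_ ?_
    · intro t ht
      have ht' : t < sK ω := EReal.coe_lt_coe_iff.mp ht
      exact EReal.coe_lt_coe_iff.mpr (hgω ▸ hgmono ht')
    · rw [lFil_coe, lFil_coe]
      have := (hgcont.continuousWithinAt (x := sK ω) (s := Iio (sK ω))).tendsto_nhdsWithin
        (t := Iio ω) (fun s hs => by
          simp only [mem_Iio] at hs ⊢
          exact hgω ▸ hgmono hs)
      rwa [hgω] at this
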